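/- arXiv:1403.5605 — 3 statements merged into one kernel-verified Lean document; each statement's English description precedes it below -/
import Mathlib

section
/- The BWBGME algorithm satisfies the Concurrent Entry property: in any execution, if a process P_i is in the entry section and throughout that period every other process P_j satisfies Token[j].session ∈ {0, mysession of P_i} (i.e., there is no conflicting process), then P_i enters the critical section within a bounded number of its own steps. -/
/-! ## Model of the Black and White Bakery GME (BWBGME) algorithm -/

inductive Color : Type
  | black
  | white
  deriving DecidableEq

/-- The opposite color. -/
def Color.opp : Color → Color
  | .black => .white
  | .white => .black

/-- A token: a session number, a color in {black, white, ⊥} (`none` is ⊥) and a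
token number. -/
structure BWTok where
  session : ℕ
  color : Option Color
  number : ℕ
  deriving DecidableEq

def BWTok.init : BWTok := ⟨0, none, 0⟩

/-- Program counter of a process in the BWBGME algorithm.  The doorway is
`d1 s` (Token[i]:=(s,⊥,0)), `d2 s` (Choosing[i]:=true, line 4),
`d3 s` (mycolor:=GlobalColor, line 5), `scan s c j m` (the loop computing the max `m`
of the token numbers of conflicting processes with token color `c`; `j` is the next
index to read), `d4 s c m` (Token[i]:=(s,c,m), where `m` is the final mynumber) and
`d5 s c m` (Choosing[i]:=false).  The waiting room iterates, for each `j`: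
`w1` (wait until Choosing[j]=false or Token[j].session=s), `wB` (the branch reading
Token[j].color), and the busy-waits `wSame` / `wDiff`.  The exit section is the scan
`x1 s c m j` looking for an active process of the opposite color (entered only when
`m ≠ 1`), `xFlip s c m` (GlobalColor := opposite of `c`) and `x2` (Token[i]:=(0,⊥,0)). -/
inductive BWPc : Type
  | remainder
  | d1 (s : ℕ)
  | d2 (s : ℕ)
  | d3 (s : ℕ)
  | scan (s : ℕ) (c : Color) (j : ℕ) (m : ℕ)
  | d4 (s : ℕ) (c : Color) (m : ℕ)
  | d5 (s : ℕ) (c : Color) (m : ℕ)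
  | w1 (s : ℕ) (c : Color) (m : ℕ) (j : ℕ)
  | wB (s : ℕ) (c : Color) (m : ℕ) (j : ℕ)
  | wSame (s : ℕ) (c : Color) (m : ℕ) (j : ℕ)
  | wDiff (s : ℕ) (c : Color) (m : ℕ) (j : ℕ)
  | cs (s : ℕ) (c : Color) (m : ℕ)
  | x1 (s : ℕ) (c : Color) (m : ℕ) (j : ℕ)
  | xFlip (s : ℕ) (c : Color) (m : ℕ)
  | x2
  deriving DecidableEq

/-- Global state: GlobalColor, the shared arrays Token and Choosing, and the
control state of each process. -/
structure BWState (N : ℕ) where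
  gcolor : Color
  token : Fin N → BWTok
  choosing : Fin N → Bool
  pc : Fin N → BWPc

/-- Initial state; GlobalColor is initialized arbitrarily to `c0`. -/
def bwInit (N : ℕ) (c0 : Color) : BWState N :=
  { gcolor := c0, token := fun _ => BWTok.init, choosing := fun _ => false,
    pc := fun _ => BWPc.remainder }

/-- One atomic step of process `i` of the BWBGME algorithm. -/
def bwStep {N : ℕ} (st : BWState N) (i : Fin N) (st' : BWState N) : Prop :=
  match st.pc i with
  | .remainder =>
      st' = st ∨ ∃ s : ℕ, 0 < s ∧ st' = { st with pc := Function.update st.pc i (.d1 s) }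
  | .d1 s =>
      st' = { st with token := Function.update st.token i ⟨s, none, 0⟩,
                      pc := Function.update st.pc i (.d2 s) }
  | .d2 s =>
      st' = { st with choosing := Function.update st.choosing i true,
                      pc := Function.update st.pc i (.d3 s) }
  | .d3 s =>
      st' = { st with pc := Function.update st.pc i (.scan s st.gcolor 0 0) }
  | .scan s c j m =>
      if h : j < N then
        st' = { st with pc := Function.update st.pc i (.scan s c (j+1)
                  (if (st.token ⟨j, h⟩).color = some c ∧ (st.token ⟨j, h⟩).session ≠ 0 ∧
                      (st.token ⟨j, h⟩).session ≠ s
                   then max m (st.token ⟨j, h⟩).number else m)) }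
      else
        st' = { st with pc := Function.update st.pc i (.d4 s c (m+1)) }
  | .d4 s c m =>
      st' = { st with token := Function.update st.token i ⟨s, some c, m⟩,
                      pc := Function.update st.pc i (.d5 s c m) }
  | .d5 s c m =>
      st' = { st with choosing := Function.update st.choosing i false,
                      pc := Function.update st.pc i (.w1 s c m 0) }
  | .w1 s c m j =>
      if h : j < N then
        if st.choosing ⟨j, h⟩ = false ∨ (st.token ⟨j, h⟩).session = s then
          st' = { st with pc := Function.update st.pc i (.wB s c m j) }
        else st' = st
      else
        st' = { st with pc := Function.update st.pc i (.cs s c m) }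
  | .wB s c m j =>
      if h : j < N then
        if (st.token ⟨j, h⟩).color = some c then
          st' = { st with pc := Function.update st.pc i (.wSame s c m j) }
        else
          st' = { st with pc := Function.update st.pc i (.wDiff s c m j) }
      else st' = st
  | .wSame s c m j =>
      if h : j < N then
        if (m < (st.token ⟨j, h⟩).number ∨ (m = (st.token ⟨j, h⟩).number ∧ i.val < j)) ∨
            (st.token ⟨j, h⟩).color ≠ some c ∨ (st.token ⟨j, h⟩).session = 0 ∨
            (st.token ⟨j, h⟩).session = s then
          st' = { st with pc := Function.update st.pc i (.w1 s c m (j+1)) }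
        else st' = st
      else st' = st
  | .wDiff s c m j =>
      if h : j < N then
        if st.gcolor ≠ c ∨ (st.token ⟨j, h⟩).color = some c ∨
            (st.token ⟨j, h⟩).session = 0 ∨ (st.token ⟨j, h⟩).session = s then
          st' = { st with pc := Function.update st.pc i (.w1 s c m (j+1)) }
        else st' = st
      else st' = st
  | .cs s c m =>
      st' = st ∨
        st' = { st with pc :=
                  Function.update st.pc i (if m = 1 then BWPc.x2 else BWPc.x1 s c m 0) }
  | .x1 s c m j =>
      if h : j < N then
        if (st.token ⟨j, h⟩).session ≠ 0 ∧ (st.token ⟨j, h⟩).color = some c.opp then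
          st' = { st with pc := Function.update st.pc i .x2 }
        else
          st' = { st with pc := Function.update st.pc i (.x1 s c m (j+1)) }
      else
        st' = { st with pc := Function.update st.pc i (.xFlip s c m) }
  | .xFlip _ c _ =>
      st' = { st with gcolor := c.opp, pc := Function.update st.pc i .x2 }
  | .x2 =>
      st' = { st with token := Function.update st.token i BWTok.init,
                      pc := Function.update st.pc i .remainder }

/-- An execution of the BWBGME algorithm: an interleaving of atomic steps from an
initial state (with arbitrary GlobalColor) in which every process outside its
remainder section eventually takes its next step. -/
structure BWExec (N : ℕ) where
  state : ℕ → BWState N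
  sched : ℕ → Fin N
  init : ∃ c0, state 0 = bwInit N c0
  step : ∀ n, bwStep (state n) (sched n) (state (n + 1))
  fair : ∀ (i : Fin N) (n : ℕ), (state n).pc i ≠ BWPc.remainder →
           ∃ m, n ≤ m ∧ sched m = i

/-- Process `i` is in the critical section. -/
def bwInCS {N : ℕ} (st : BWState N) (i : Fin N) : Prop :=
  ∃ s c m, st.pc i = BWPc.cs s c m

/-- Process `i` is in the entry section (doorway or waiting room). -/
def bwInEntry {N : ℕ} (st : BWState N) (i : Fin N) : Prop :=
  match st.pc i with
  | .remainder => False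
  | .cs _ _ _ => False
  | .x1 _ _ _ _ => False
  | .xFlip _ _ _ => False
  | .x2 => False
  | _ => True

/-- At step `n`, process `i` leaves the remainder and enters the doorway,
requesting session `s`. -/
def bwEntersDoorway {N : ℕ} (e : BWExec N) (i : Fin N) (s : ℕ) (n : ℕ) : Prop :=
  (e.state n).pc i = BWPc.remainder ∧ (e.state (n+1)).pc i = BWPc.d1 s

/-- At step `n`, process `i` completes its doorway (executes Choosing[i]:=false),
having requested session `s` and chosen token color `c` and token number `m`. -/
def bwCompletesDoorway {N : ℕ} (e : BWExec N) (i : Fin N) (s : ℕ) (c : Color) (m : ℕ)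
    (n : ℕ) : Prop :=
  (e.state n).pc i = BWPc.d5 s c m ∧ (e.state (n+1)).pc i = BWPc.w1 s c m 0

/-- At step `n`, process `i` executes line 5, reading GlobalColor = `c`
(its invocation requests session `s`). -/
def bwLine5 {N : ℕ} (e : BWExec N) (i : Fin N) (s : ℕ) (c : Color) (n : ℕ) : Prop :=
  (e.state n).pc i = BWPc.d3 s ∧ (e.state (n+1)).pc i = BWPc.scan s c 0 0

/-- At step `n`, process `i` executes line 4 (Choosing[i]:=true). -/
def bwLine4 {N : ℕ} (e : BWExec N) (i : Fin N) (s : ℕ) (n : ℕ) : Prop :=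
  (e.state n).pc i = BWPc.d2 s ∧ (e.state (n+1)).pc i = BWPc.d3 s

/-- At step `n`, process `i` enters the critical section. -/
def bwEntersCS {N : ℕ} (e : BWExec N) (i : Fin N) (n : ℕ) : Prop :=
  ¬ bwInCS (e.state n) i ∧ bwInCS (e.state (n+1)) i

/-- At step `n`, process `i` finishes (leaves) the critical section. -/
def bwLeavesCS {N : ℕ} (e : BWExec N) (i : Fin N) (n : ℕ) : Prop :=
  bwInCS (e.state n) i ∧ ¬ bwInCS (e.state (n+1)) i

/-- At step `n`, process `i` completes its exit section
(executes Token[i]:=(0,⊥,0) and returns to the remainder section). -/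
def bwCompletesExit {N : ℕ} (e : BWExec N) (i : Fin N) (n : ℕ) : Prop :=
  (e.state n).pc i = BWPc.x2 ∧ (e.state (n+1)).pc i = BWPc.remainder

/-- Process `i` does not pass through the remainder section during `(a, b]`
(so times `a` and `b` belong to the same invocation of `i`). -/
def bwActiveThrough {N : ℕ} (e : BWExec N) (i : Fin N) (a b : ℕ) : Prop :=
  ∀ k, a < k → k ≤ b → (e.state k).pc i ≠ BWPc.remainder

/-- GlobalColor is flipped at step `n`: the step is a write that changes its value. -/
def bwFlipAt {N : ℕ} (e : BWExec N) (n : ℕ) : Prop :=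
  (e.state (n+1)).gcolor ≠ (e.state n).gcolor

/-! Without a conflicting process no busy-wait of the waiting room can block: a process whose
token has session `0` is not choosing (an invariant of all reachable states), and a process
with token session `s` is skipped explicitly. Hence every own step of `P_i` in its entry
section brings it one position closer to the critical section along a path of length
`4N + 7`, while the steps of the other processes leave its program counter unchanged. -/

def ProcInv (pc : BWPc) (ch : Bool) (sess : ℕ) : Prop :=
  match pc with
  | .remainder => ch = false ∧ sess = 0
  | .d1 s => ch = false ∧ sess = 0 ∧ 0 < s
  | .d2 s => ch = false ∧ sess = s ∧ 0 < s
  | .d3 s => ch = true ∧ sess = s ∧ 0 < s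
  | .scan s _ _ _ => ch = true ∧ sess = s ∧ 0 < s
  | .d4 s _ _ => ch = true ∧ sess = s ∧ 0 < s
  | .d5 s _ _ => ch = true ∧ sess = s ∧ 0 < s
  | .w1 s _ _ _ => ch = false ∧ sess = s ∧ 0 < s
  | .wB s _ _ _ => ch = false ∧ sess = s ∧ 0 < s
  | .wSame s _ _ _ => ch = false ∧ sess = s ∧ 0 < s
  | .wDiff s _ _ _ => ch = false ∧ sess = s ∧ 0 < s
  | .cs s _ _ => ch = false ∧ sess = s ∧ 0 < s
  | .x1 s _ _ _ => ch = false ∧ sess = s ∧ 0 < s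
  | .xFlip s _ _ => ch = false ∧ sess = s ∧ 0 < s
  | .x2 => ch = false

def BWState.Inv {N : ℕ} (st : BWState N) : Prop :=
  ∀ j, ProcInv (st.pc j) (st.choosing j) (st.token j).session

lemma ProcInv.choosing_eq_false {pc : BWPc} {ch : Bool} (h : ProcInv pc ch 0) : ch = false := by
  cases pc <;> simp only [ProcInv] at h <;> first | exact h | exact h.1 | omega

lemma bwStep_frame {N : ℕ} {st st' : BWState N} {k i : Fin N}
    (h : bwStep st k st') (hik : i ≠ k) :
    st'.pc i = st.pc i ∧ st'.choosing i = st.choosing i ∧ st'.token i = st.token i := by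
  unfold bwStep at h
  split at h <;> (repeat' split at h) <;>
    (first | subst h | rcases h with rfl | ⟨_, _, rfl⟩) <;> simp [Function.update_of_ne hik]

lemma BWState.Inv.bwStep {N : ℕ} {st st' : BWState N} {k : Fin N}
    (hI : st.Inv) (h : bwStep st k st') : st'.Inv := by
  intro j
  by_cases hjk : j = k
  · subst hjk
    have hj := hI j
    unfold _root_.bwStep at h
    split at h <;> rename_i hpc <;> rw [hpc] at hj <;> (repeat' split at h) <;>
      (first | subst h | rcases h with rfl | ⟨_, _, rfl⟩) <;> simp_all [ProcInv, BWTok.init]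
  · obtain ⟨hpc, hch, htok⟩ := bwStep_frame h hjk
    simpa only [hpc, hch, htok] using hI j

lemma BWExec.inv {N : ℕ} (e : BWExec N) (k : ℕ) : (e.state k).Inv := by
  induction k with
  | zero =>
    obtain ⟨c0, h0⟩ := e.init
    simp [h0, BWState.Inv, bwInit, ProcInv, BWTok.init]
  | succ k ih => exact ih.bwStep (e.step k)

/-- The loop bounds are what make `entryRank` decrease at every step. -/
def BWPc.Entry (N s : ℕ) : BWPc → Prop
  | .d1 s' | .d2 s' | .d3 s' | .d4 s' _ _ | .d5 s' _ _ => s' = s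
  | .scan s' _ j _ | .w1 s' _ _ j => s' = s ∧ j ≤ N
  | .wB s' _ _ j | .wSame s' _ _ j | .wDiff s' _ _ j => s' = s ∧ j < N
  | _ => False

/-- The number of own steps from this location to the critical section if no wait blocks. -/
def BWPc.entryRank (N : ℕ) : BWPc → ℕ
  | .d1 _ => 4*N+7
  | .d2 _ => 4*N+6
  | .d3 _ => 4*N+5
  | .scan _ _ j _ => 4*N+4 - j
  | .d4 _ _ _ => 3*N+3
  | .d5 _ _ _ => 3*N+2
  | .w1 _ _ _ j => 3*(N-j)+1
  | .wB _ _ _ j => 3*(N-j)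
  | .wSame _ _ _ j | .wDiff _ _ _ j => 3*(N-j)-1
  | _ => 0

lemma bwInEntry_of_entry {N s : ℕ} {st : BWState N} {i : Fin N}
    (h : (st.pc i).Entry N s) : bwInEntry st i := by
  cases hpc : st.pc i <;> simp_all [BWPc.Entry, bwInEntry]

lemma BWState.Inv.session_eq_zero_or_eq {N s : ℕ} {st : BWState N} {i : Fin N}
    (hI : st.Inv) (hE : (st.pc i).Entry N s)
    (hH : ∀ j, j ≠ i → (st.token j).session = 0 ∨ (st.token j).session = s) (j : Fin N) :
    (st.token j).session = 0 ∨ (st.token j).session = s := by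
  obtain rfl | hji := eq_or_ne j i
  · have hi := hI j
    cases hpc : st.pc j <;> simp_all [BWPc.Entry, ProcInv]
  · exact hH j hji

lemma bwStep_entry_progress {N s : ℕ} {st st' : BWState N} {i : Fin N}
    (hI : st.Inv) (hE : (st.pc i).Entry N s)
    (hH : ∀ j, (st.token j).session = 0 ∨ (st.token j).session = s) (h : bwStep st i st') :
    bwInCS st' i ∨
      ((st'.pc i).Entry N s ∧ (st'.pc i).entryRank N < (st.pc i).entryRank N) := by
  have hch : ∀ j, st.choosing j = false ∨ (st.token j).session = s := fun j =>
    (hH j).imp_left fun h0 => (h0 ▸ hI j).choosing_eq_false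
  unfold bwStep at h
  cases hpc : st.pc i <;> simp only [hpc, BWPc.Entry] at h hE <;> try contradiction
  all_goals first | subst hE | obtain ⟨rfl, hjN⟩ := hE
  all_goals (try split_ifs at h) <;>
    first
    | (subst h; simp [BWPc.Entry, BWPc.entryRank, bwInCS] <;> omega)
    | omega
    | (exfalso; have := hH ⟨_, ‹_ < N›⟩; have := hch ⟨_, ‹_ < N›⟩; tauto)

lemma exists_of_potential {p P Q : ℕ → Prop} [DecidablePred p] {r : ℕ → ℕ} {a m : ℕ}
    (hstep : ∀ k, a ≤ k → P k →
      Q (k + 1) ∨ (P (k + 1) ∧ r (k + 1) + (if p k then 1 else 0) ≤ r k))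
    (ha : P a) (hcount : r a < ((Finset.Ico a m).filter p).card) :
    ∃ c, a < c ∧ c ≤ m ∧ Q c := by
  by_contra! hQ
  have hbound : ∀ k, a ≤ k → k ≤ m →
      P k ∧ r k + ((Finset.Ico a k).filter p).card ≤ r a := by
    intro k hak hkm
    induction k, hak using Nat.le_induction with
    | base => simpa using ha
    | succ k hak ih =>
      obtain ⟨hPk, hrk⟩ := ih (by omega)
      rcases hstep k hak hPk with hQk | ⟨hPk', hr⟩
      · exact absurd hQk (hQ _ (by omega) hkm)
      · have hcard : ((Finset.Ico a (k + 1)).filter p).card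
            = ((Finset.Ico a k).filter p).card + if p k then 1 else 0 := by
          rw [Finset.card_filter, Finset.card_filter, Finset.sum_Ico_succ_top hak]
        exact ⟨hPk', by omega⟩
  rcases le_or_gt a m with ham | hma
  · have := (hbound m ham le_rfl).2
    omega
  · simp [Finset.Ico_eq_empty_of_le hma.le] at hcount

lemma BWExec.entry_step {N s : ℕ} (e : BWExec N) {i : Fin N} {k : ℕ}
    (hE : ((e.state k).pc i).Entry N s)
    (hH : ∀ j, j ≠ i →
      ((e.state k).token j).session = 0 ∨ ((e.state k).token j).session = s) :
    bwInCS (e.state (k + 1)) i ∨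
      (((e.state (k + 1)).pc i).Entry N s ∧
        ((e.state (k + 1)).pc i).entryRank N + (if e.sched k = i then 1 else 0)
          ≤ ((e.state k).pc i).entryRank N) := by
  by_cases hk : e.sched k = i
  · have hstep := e.step k
    rw [hk] at hstep
    rcases bwStep_entry_progress (e.inv k) hE ((e.inv k).session_eq_zero_or_eq hE hH) hstep
      with hcs | ⟨hE', hr⟩
    · exact Or.inl hcs
    · exact Or.inr ⟨hE', by simp only [hk, if_true]; omega⟩
  · have hpc := (bwStep_frame (e.step k) (Ne.symm hk)).1
    exact Or.inr ⟨hpc ▸ hE, by simp [hk, hpc]⟩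

/-- **Concurrent entry for the BWBGME algorithm.**  There is a bound `B` (depending only
on `N`) such that in every execution, if process `i` enters the entry section requesting
session `s` and, throughout the period it is in the entry section, every other process
`j` has `Token[j].session ∈ {0, s}` (no conflicting process), then `i` enters the
critical section within `B` of its own steps. -/
theorem bw_concurrent_entry (N : ℕ) :
    ∃ B : ℕ, ∀ (e : BWExec N) (i : Fin N) (s : ℕ) (n : ℕ),
      bwEntersDoorway e i s n →
      (∀ m, n < m → bwInEntry (e.state m) i → ∀ j, j ≠ i →
        ((e.state m).token j).session = 0 ∨ ((e.state m).token j).session = s) →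
      ∀ m, n ≤ m →
        B ≤ ((Finset.Ico n m).filter (fun k => e.sched k = i)).card →
        ∃ c, n ≤ c ∧ c ≤ m ∧ bwInCS (e.state c) i := by
  refine ⟨4 * N + 9, fun e i s n hEnter hH m _ hcount => ?_⟩
  have hstart : ((e.state (n + 1)).pc i).Entry N s := by rw [hEnter.2]; rfl
  have hsub : (Finset.Ico n m).filter (fun k => e.sched k = i)
      ⊆ insert n ((Finset.Ico (n + 1) m).filter (fun k => e.sched k = i)) := by
    intro k
    simp only [Finset.mem_filter, Finset.mem_Ico, Finset.mem_insert]
    omega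
  have hcount' : ((e.state (n + 1)).pc i).entryRank N
      < ((Finset.Ico (n + 1) m).filter (fun k => e.sched k = i)).card := by
    have := (Finset.card_le_card hsub).trans (Finset.card_insert_le _ _)
    rw [hEnter.2, BWPc.entryRank]
    omega
  obtain ⟨c, hnc, hcm, hcs⟩ := exists_of_potential (Q := fun k => bwInCS (e.state k) i)
    (r := fun k => ((e.state k).pc i).entryRank N)
    (fun k hk hE => e.entry_step hE (hH k (by omega) (bwInEntry_of_entry hE))) hstart hcount'
  exact ⟨c, by omega, hcm, hcs⟩
end

section
/- The BWBGME algorithm satisfies the Deadlock Freedom property: in every execution in which no process stays in the critical section forever, if one or more processes are forever trying to enter their critical section with no success for any of them, then there exists a process that enters the critical section infinitely often; equivalently, no such execution exists. -/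
/-!
Suppose no process entered the critical section after some time. Every later step either
stutters or lowers the sum over all processes of a rank of their program counters (ranks
decrease along the program order from the critical section round to the waiting room, so
entering the critical section is the only step that raises a rank); hence the state
eventually freezes. In the frozen state every active process busy-waits on an active process
that either has its own color and a smaller pair (number, index), or has the other color while
the waiting one has the color of GlobalColor. The process with the least pair among those not
of the color of GlobalColor can wait on nobody, so there are none, and then the process with the
least pair overall can wait on nobody either. So no process is active, contradicting the
process that tries forever.
-/

theorem Finset.eq_empty_of_forall_exists_blocker {ι β κ : Type*} [DecidableEq β]
    [LinearOrder κ] (A : Finset ι) (col : ι → β) (key : ι → κ) (g : β)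
    (h : ∀ k ∈ A, ∃ j ∈ A, col j = col k ∧ key j < key k ∨ col k = g ∧ col j ≠ g) :
    A = ∅ := by
  have hg : ∀ k ∈ A, col k = g := by
    by_contra! ⟨k, hkA, hk⟩
    obtain ⟨k₀, hk₀, hmin⟩ := {k ∈ A | col k ≠ g}.exists_min_image key ⟨k, by simp [hkA, hk]⟩
    rw [Finset.mem_filter] at hk₀
    obtain ⟨j, hjA, ⟨hcol, hlt⟩ | ⟨hk₀g, -⟩⟩ := h k₀ hk₀.1
    · exact (hmin j (by simp [hjA, hcol, hk₀.2])).not_gt hlt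
    · exact hk₀.2 hk₀g
  by_contra hA
  obtain ⟨k₀, hk₀, hmin⟩ := A.exists_min_image key (Finset.nonempty_iff_ne_empty.2 hA)
  obtain ⟨j, hjA, ⟨-, hlt⟩ | ⟨-, hjg⟩⟩ := h k₀ hk₀
  · exact (hmin j hjA).not_gt hlt
  · exact hjg (hg j hjA)

theorem exists_forall_ge_eq_of_eq_or_lt {α : Type*} (f : ℕ → α) (μ : α → ℕ) (T : ℕ)
    (h : ∀ t, T ≤ t → f (t + 1) = f t ∨ μ (f (t + 1)) < μ (f t)) :
    ∃ t₀, T ≤ t₀ ∧ ∀ u, t₀ ≤ u → f u = f t₀ := by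
  obtain ⟨t₀, hTt₀, hmin⟩ := (measure (μ ∘ f)).wf.has_min (Set.Ici T) ⟨T, Set.self_mem_Ici⟩
  refine ⟨t₀, hTt₀, fun u hu => ?_⟩
  induction u, hu using Nat.le_induction with
  | base => rfl
  | succ u hu ih =>
    rcases h u (le_trans hTt₀ hu) with heq | hlt
    · exact heq.trans ih
    · have hlt' : μ (f (u + 1)) < μ (f t₀) := ih ▸ hlt
      exact absurd hlt' (hmin (u + 1) (le_trans hTt₀ (Nat.le_succ_of_le hu)))

theorem Fintype.sum_comp_update_lt {ι α : Type*} [Fintype ι] [DecidableEq ι] (r : α → ℕ)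
    {f : ι → α} {k : ι} {p : α} (h : r p < r (f k)) :
    ∑ x, r (Function.update f k p x) < ∑ x, r (f x) := by
  refine Finset.sum_lt_sum (fun j _ => ?_) ⟨k, Finset.mem_univ k, by simpa using h⟩
  rcases eq_or_ne j k with rfl | hne
  · simpa using h.le
  · simp [Function.update_of_ne hne]

section
variable {N : ℕ}

def bwRank (N : ℕ) : BWPc → ℕ
  | .remainder => 4 * N + 10
  | .d1 _ => 4 * N + 9
  | .d2 _ => 4 * N + 8
  | .d3 _ => 4 * N + 7
  | .scan _ _ j _ => 3 * N + 6 + (N - j)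
  | .d4 _ _ _ => 3 * N + 5
  | .d5 _ _ _ => 3 * N + 4
  | .w1 _ _ _ j => 3 * (N - j) + 3
  | .wB _ _ _ j => 3 * (N - j) + 2
  | .wSame _ _ _ j | .wDiff _ _ _ j => 3 * (N - j) + 1
  | .cs _ _ _ => 6 * N + 20
  | .x1 _ _ _ j => 4 * N + 13 + (N - j)
  | .xFlip _ _ _ => 4 * N + 12
  | .x2 => 4 * N + 11

def bwMeasure (S : BWState N) : ℕ := ∑ k, bwRank N (S.pc k)

lemma bwMeasure_lt_of_pc_eq_update {S S' : BWState N} {k : Fin N} {p : BWPc}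
    (hpc : S'.pc = Function.update S.pc k p) (h : bwRank N p < bwRank N (S.pc k)) :
    bwMeasure S' < bwMeasure S := by
  rw [bwMeasure, bwMeasure, hpc]
  exact Fintype.sum_comp_update_lt (bwRank N) h

lemma bwStep.eq_or_bwMeasure_lt {S S' : BWState N} {k : Fin N} (h : bwStep S k S')
    (hcs : bwInCS S' k → bwInCS S k) : S' = S ∨ bwMeasure S' < bwMeasure S := by
  rw [bwStep] at h
  split at h <;> rename_i hpc <;> (repeat' split at h) <;> obtain rfl | ⟨_, -, rfl⟩ := h
  all_goals first
    | exact .inl rfl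
    | exact .inr (bwMeasure_lt_of_pc_eq_update rfl (by simp only [hpc, bwRank]; omega))
    | exact absurd (hcs ⟨_, _, _, Function.update_self ..⟩) (by simp [bwInCS, hpc])

def bwLocalInv (N : ℕ) : BWPc → BWTok → Bool → Prop
  | .remainder, tok, ch => tok = BWTok.init ∧ ch = false
  | .d5 s c m, tok, _ => tok = ⟨s, some c, m⟩
  | .w1 s c m _, tok, ch => tok = ⟨s, some c, m⟩ ∧ ch = false
  | .wB s c m j, tok, ch | .wSame s c m j, tok, ch | .wDiff s c m j, tok, ch =>
      tok = ⟨s, some c, m⟩ ∧ ch = false ∧ j < N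
  | .cs _ _ _, _, ch | .x1 _ _ _ _, _, ch | .xFlip _ _ _, _, ch | .x2, _, ch => ch = false
  | _, _, _ => True

def bwInv (S : BWState N) : Prop := ∀ k, bwLocalInv N (S.pc k) (S.token k) (S.choosing k)

lemma bwInv.step {S S' : BWState N} {k : Fin N} (hS : bwInv S) (h : bwStep S k S') :
    bwInv S' := by
  have hk := hS k
  rw [bwStep] at h
  split at h <;> rename_i hpc <;> rw [hpc] at hk <;> (repeat' split at h) <;>
    obtain rfl | ⟨_, -, rfl⟩ := h
  all_goals first
    | exact hS
    | intro x; rcases eq_or_ne x k with rfl | hx <;>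
        [simp_all [bwLocalInv]; simpa [Function.update_of_ne hx] using hS x]

lemma choosing_eq_false_of_bwStep_self {S : BWState N} {k : Fin N}
    (hk : bwLocalInv N (S.pc k) (S.token k) (S.choosing k))
    (h : S.pc k ≠ .remainder → bwStep S k S) : S.choosing k = false := by
  by_cases hrem : S.pc k = .remainder
  · rw [hrem] at hk
    exact hk.2
  have h := h hrem
  rw [bwStep] at h
  split at h <;> rename_i hpc <;> rw [hpc] at hk <;> (repeat' split at h)
  all_goals first
    | (have := congrFun (congrArg BWState.pc h) k; simp [hpc] at this; done)
    | exact absurd hpc hrem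
    | exact hk
    | exact hk.2
    | exact hk.2.1

lemma exists_blocker_of_bwStep_self {S : BWState N} {k : Fin N} (h : bwStep S k S)
    (hk : bwLocalInv N (S.pc k) (S.token k) (S.choosing k)) (hrem : S.pc k ≠ .remainder)
    (hcs : ¬ bwInCS S k) (hch : ∀ x, S.choosing x = false) :
    ∃ j, (S.token j).session ≠ 0 ∧
      ((S.token j).color = (S.token k).color ∧
          toLex ((S.token j).number, j) < toLex ((S.token k).number, k) ∨
        (S.token k).color = some S.gcolor ∧ (S.token j).color ≠ some S.gcolor) := by
  rw [bwStep] at h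
  split at h <;> rename_i hpc <;> rw [hpc] at hk <;> (repeat' split at h)
  -- Only the stuck busy-waits at `wSame` and `wDiff` survive: every other branch of the step
  -- moves the pc of `k` or contradicts a hypothesis.
  all_goals first
    | (have := congrFun (congrArg BWState.pc h) k; simp [hpc] at this; done)
    | exact absurd hpc hrem
    | (simp [bwInCS, hpc] at hcs; done)
    | exact absurd hk.2.2 ‹¬_ < N›
    | exact absurd (Or.inl (hch _)) ‹¬(_ = false ∨ _)›
    | skip
  · rename_i hj hwait
    simp only [not_or, not_and, not_lt, not_not] at hwait
    obtain ⟨⟨hle, hkj⟩, hcol, hses₀, hses⟩ := hwait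
    have hne : (⟨_, hj⟩ : Fin N) ≠ k := by rintro rfl; simp [hk.1] at hses
    refine ⟨⟨_, hj⟩, hses₀, .inl ⟨by rw [hk.1, hcol], ?_⟩⟩
    have := Fin.val_ne_of_ne hne
    simp only [Prod.Lex.toLex_lt_toLex, hk.1, Fin.lt_def] at this ⊢
    omega
  · rename_i hj hwait
    simp only [not_or, not_not] at hwait
    obtain ⟨hg, hcol, hses₀, -⟩ := hwait
    exact ⟨⟨_, hj⟩, hses₀, .inr ⟨by rw [hk.1, hg], hg ▸ hcol⟩⟩

def BWState.IsDeadlocked (S : BWState N) : Prop :=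
  ∀ k, S.pc k ≠ .remainder → ¬ bwInCS S k ∧ bwStep S k S

lemma BWState.IsDeadlocked.pc_eq_remainder {S : BWState N} (hinv : bwInv S)
    (hS : S.IsDeadlocked) (k : Fin N) : S.pc k = .remainder := by
  have hch : ∀ x, S.choosing x = false := fun x =>
    choosing_eq_false_of_bwStep_self (hinv x) fun hx => (hS x hx).2
  have hactive : ∀ x, (S.token x).session ≠ 0 → S.pc x ≠ .remainder := by
    intro x hx hrem
    have hx' := hinv x
    rw [hrem] at hx'
    simp [hx'.1, BWTok.init] at hx
  have hempty := Finset.eq_empty_of_forall_exists_blocker {x | S.pc x ≠ .remainder}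
    (fun x => (S.token x).color) (fun x => toLex ((S.token x).number, x)) (some S.gcolor)
    fun x hx => by
      rw [Finset.mem_filter] at hx
      obtain ⟨j, hj₀, hj⟩ := exists_blocker_of_bwStep_self (hS x hx.2).2 (hinv x) hx.2
        (hS x hx.2).1 hch
      exact ⟨j, Finset.mem_filter.2 ⟨Finset.mem_univ j, hactive j hj₀⟩, hj⟩
  exact not_not.1 (Finset.filter_eq_empty_iff.1 hempty (Finset.mem_univ k))

end

namespace BWExec
variable {N : ℕ} (e : BWExec N)

lemma bwInv_state (t : ℕ) : bwInv (e.state t) := by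
  induction t with
  | zero =>
    obtain ⟨c₀, h₀⟩ := e.init
    simp [h₀, bwInv, bwInit, bwLocalInv]
  | succ t ih => exact ih.step (e.step t)

lemma exists_forall_ge_state_eq {T : ℕ} (hT : ∀ t, T ≤ t → ∀ k, ¬ bwEntersCS e k t) :
    ∃ t₀, T ≤ t₀ ∧ ∀ u, t₀ ≤ u → e.state u = e.state t₀ :=
  exists_forall_ge_eq_of_eq_or_lt e.state bwMeasure T fun t ht =>
    (e.step t).eq_or_bwMeasure_lt fun h => not_not.1 fun h' => hT t ht _ ⟨h', h⟩

lemma isDeadlocked_of_forall_ge_state_eq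
    (hncs : ∀ i n, bwInCS (e.state n) i → ∃ m, n ≤ m ∧ ¬ bwInCS (e.state m) i) {t₀ : ℕ}
    (h : ∀ u, t₀ ≤ u → e.state u = e.state t₀) : (e.state t₀).IsDeadlocked := by
  intro k hk
  constructor
  · intro hcs
    obtain ⟨m, hm, hout⟩ := hncs k t₀ hcs
    exact hout (h m hm ▸ hcs)
  · obtain ⟨m, hm, rfl⟩ := e.fair k t₀ hk
    simpa [h m hm, h (m + 1) (by omega)] using e.step m

end BWExec

/-- **Deadlock freedom for the BWBGME algorithm** (property P6).  In every execution in
which no process stays in the critical section forever, if some process is forever trying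
to enter its critical section (it remains in the entry section from some time `n` on,
hence without success), then some process enters the critical section infinitely often. -/
theorem bw_deadlock_freedom {N : ℕ} (e : BWExec N)
    (hncs : ∀ (i : Fin N) (n : ℕ), bwInCS (e.state n) i →
      ∃ m, n ≤ m ∧ ¬ bwInCS (e.state m) i)
    (i : Fin N) (n : ℕ) (htry : ∀ m, n ≤ m → bwInEntry (e.state m) i) :
    ∃ k : Fin N, ∀ m : ℕ, ∃ m', m ≤ m' ∧ bwEntersCS e k m' := by
  by_contra! hcon
  obtain ⟨T, hT⟩ := Filter.eventually_atTop.1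
    (Filter.eventually_all.2 fun k => Filter.eventually_atTop.2 (hcon k))
  obtain ⟨t₀, ht₀, hconst⟩ := e.exists_forall_ge_state_eq (T := max n T)
    fun t ht => hT t (le_of_max_le_right ht)
  have hrem := (e.isDeadlocked_of_forall_ge_state_eq hncs hconst).pc_eq_remainder
    (e.bwInv_state t₀) i
  have hentry := htry t₀ (le_of_max_le_left ht₀)
  rw [bwInEntry, hrem] at hentry
  exact hentry
end

section
/- The BWBGME algorithm satisfies the Starvation Freedom property: in every execution in which no process stays in the critical section forever, every process that enters the entry section eventually enters the critical section. -/
/-!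
Suppose process `i` never reaches the critical section. Every move of a process outside its
remainder lowers its rank along the program order, so a process that stops returning to its
remainder eventually has a constant pc; `i` thus ends up parked at a busy-wait with a fixed
token of color `c`. While that token stands, each process can flip GlobalColor to `c` at most
once, because its next exit scan stops at `i`'s token; so GlobalColor eventually settles at
some `g`. From then on a process that keeps cycling enters with color `g`, and whenever it
conflicts with a parked process it either takes a larger number or is trapped in front of it
for good. Hence a parked process can only wait on another parked process: one of its own
color with a lexicographically smaller (number, id), or, if its color is `g`, one of color
`g.opp`. Parked processes of color `g.opp` would therefore form an infinite descent, so there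
are none; then the same holds for color `g`, contradicting that `i` is parked.
-/

theorem Color.opp_opp (c : Color) : c.opp.opp = c := by cases c <;> rfl

theorem Color.opp_ne_self (c : Color) : c.opp ≠ c := by cases c <;> simp [Color.opp]

theorem Color.eq_opp_of_ne {c d : Color} (h : c ≠ d) : c = d.opp := by
  cases c <;> cases d <;> simp_all [Color.opp]

namespace BWBakery

open Function

section Step

variable {N : ℕ} {st st' : BWState N} {k i : Fin N} {s m j : ℕ} {c : Color}

lemma step_frame (h : bwStep st k st') (hik : i ≠ k) :
    st'.pc i = st.pc i ∧ st'.token i = st.token i ∧ st'.choosing i = st.choosing i := by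
  revert h; unfold bwStep
  split <;> (try split) <;> (try split) <;> intro hs <;>
    (try obtain hs | ⟨_, _, hs⟩ := hs) <;> (try subst hs) <;> simp [update_of_ne hik]

lemma gcolor_step (h : bwStep st k st') :
    st'.gcolor = st.gcolor ∨ ∃ s c m, st.pc k = .xFlip s c m ∧ st'.gcolor = c.opp := by
  revert h; unfold bwStep
  split <;> (try split) <;> (try split) <;> intro hs <;>
    (try obtain hs | ⟨_, _, hs⟩ := hs) <;> (try subst hs) <;> simp_all

def PcConsistent (N : ℕ) : BWPc → BWTok → Bool → Prop
  | .remainder, tok, ch => tok = BWTok.init ∧ ch = false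
  | .d1 s, tok, ch => tok = BWTok.init ∧ ch = false ∧ 0 < s
  | .d2 s, tok, ch => tok = ⟨s, none, 0⟩ ∧ ch = false ∧ 0 < s
  | .d3 s, tok, ch => tok = ⟨s, none, 0⟩ ∧ ch = true ∧ 0 < s
  | .scan s _ j _, tok, ch => tok = ⟨s, none, 0⟩ ∧ ch = true ∧ 0 < s ∧ j ≤ N
  | .d4 s _ _, tok, ch => tok = ⟨s, none, 0⟩ ∧ ch = true ∧ 0 < s
  | .d5 s c m, tok, ch => tok = ⟨s, some c, m⟩ ∧ ch = true ∧ 0 < s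
  | .w1 s c m j, tok, ch => tok = ⟨s, some c, m⟩ ∧ ch = false ∧ 0 < s ∧ j ≤ N
  | .wB s c m j, tok, ch => tok = ⟨s, some c, m⟩ ∧ ch = false ∧ 0 < s ∧ j < N
  | .wSame s c m j, tok, ch => tok = ⟨s, some c, m⟩ ∧ ch = false ∧ 0 < s ∧ j < N
  | .wDiff s c m j, tok, ch => tok = ⟨s, some c, m⟩ ∧ ch = false ∧ 0 < s ∧ j < N
  | .cs s c m, tok, ch => tok = ⟨s, some c, m⟩ ∧ ch = false ∧ 0 < s
  | .x1 s c m _, tok, ch => tok = ⟨s, some c, m⟩ ∧ ch = false ∧ 0 < s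
  | .xFlip s c m, tok, ch => tok = ⟨s, some c, m⟩ ∧ ch = false ∧ 0 < s
  | .x2, tok, ch => (∃ s c m, tok = ⟨s, some c, m⟩ ∧ 0 < s) ∧ ch = false

def StateInv (st : BWState N) : Prop :=
  ∀ i, PcConsistent N (st.pc i) (st.token i) (st.choosing i)

lemma stateInv_init (N : ℕ) (c0 : Color) : StateInv (bwInit N c0) := by
  intro i; simp [bwInit, PcConsistent]

lemma stateInv_step (hI : StateInv st) (h : bwStep st k st') : StateInv st' := by
  intro i
  by_cases hik : i = k
  · subst hik
    have hi := hI i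
    revert h; unfold bwStep
    split <;> (try split) <;> (try split) <;> intro hs <;>
      (try obtain hs | ⟨_, _, hs⟩ := hs) <;> (try subst hs) <;> simp_all [PcConsistent]
  · obtain ⟨hpc, htok, hch⟩ := step_frame h hik
    rw [hpc, htok, hch]
    exact hI i

lemma eq_of_step_of_pc_eq (h : bwStep st k st') (hpc : st'.pc k = st.pc k) : st' = st := by
  revert h hpc; unfold bwStep
  split <;> (try split) <;> (try split) <;> intro hs <;>
    (try obtain hs | ⟨_, _, hs⟩ := hs) <;> (try subst hs) <;> simp_all

/-- Position along the program order, counted backwards from the remainder section. -/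
def rank (N : ℕ) : BWPc → ℕ
  | .remainder => 0
  | .x2 => 1
  | .xFlip _ _ _ => 2
  | .x1 _ _ _ j => 3 + (N - j)
  | .cs _ _ _ => N + 4
  | .wSame _ _ _ j => N + 5 + 3 * (N - j)
  | .wDiff _ _ _ j => N + 5 + 3 * (N - j)
  | .wB _ _ _ j => N + 6 + 3 * (N - j)
  | .w1 _ _ _ j => N + 7 + 3 * (N - j)
  | .d5 _ _ _ => 4 * N + 8
  | .d4 _ _ _ => 4 * N + 9
  | .scan _ _ j _ => 4 * N + 10 + (N - j)
  | .d3 _ => 5 * N + 11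
  | .d2 _ => 5 * N + 12
  | .d1 _ => 5 * N + 13

lemma rank_lt_of_step (h : bwStep st k st') (hrem : st.pc k ≠ .remainder)
    (hpc : st'.pc k ≠ st.pc k) : rank N (st'.pc k) < rank N (st.pc k) := by
  revert h hpc; unfold bwStep
  split <;> (try split) <;> (try split) <;> intro hs <;>
    (try obtain hs | ⟨_, _, hs⟩ := hs) <;> (try subst hs) <;> simp_all [rank]
  all_goals omega

def IsBusyWait (c : Color) (m : ℕ) (L : BWPc) : Prop :=
  ∃ s j, L = .w1 s c m j ∨ L = .wSame s c m j ∨ L = .wDiff s c m j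

lemma pc_cases_of_step_of_pc_eq (hI : StateInv st) (h : bwStep st k st')
    (hpc : st'.pc k = st.pc k) :
    st.pc k = .remainder ∨ bwInCS st k ∨ ∃ c m, IsBusyWait c m (st.pc k) := by
  have hk := hI k
  revert h hpc; unfold bwStep
  split <;> (try split) <;> (try split) <;> intro hs <;>
    (try obtain hs | ⟨_, _, hs⟩ := hs) <;> (try subst hs) <;>
    simp_all [bwInCS, IsBusyWait, PcConsistent]

lemma inEntry_step (h : bwStep st k st') (hE : bwInEntry st k) :
    bwInEntry st' k ∨ bwInCS st' k := by
  unfold bwInEntry at hE ⊢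
  revert h; unfold bwStep
  split <;> (try split) <;> (try split) <;> intro hs <;>
    (try obtain hs | ⟨_, _, hs⟩ := hs) <;> (try subst hs) <;> simp_all [bwInCS]

lemma stutter_w1 (h : bwStep st k st) (hpc : st.pc k = .w1 s c m j) :
    ∃ hj : j < N, st.choosing ⟨j, hj⟩ = true ∧ (st.token ⟨j, hj⟩).session ≠ s := by
  simp only [bwStep, hpc] at h
  split_ifs at h with hj hcond
  · have := congrArg (fun st => st.pc k) h; simp [hpc] at this
  · simpa [not_or, hj] using hcond
  · have := congrArg (fun st => st.pc k) h; simp [hpc] at this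

lemma stutter_wSame (hI : StateInv st) (h : bwStep st k st) (hpc : st.pc k = .wSame s c m j)
    (hj : j < N) :
    (st.token ⟨j, hj⟩).color = some c ∧ (st.token ⟨j, hj⟩).session ≠ 0 ∧
      (st.token ⟨j, hj⟩).session ≠ s ∧
      toLex ((st.token ⟨j, hj⟩).number, j) < toLex (m, k.val) := by
  simp only [bwStep, hpc, dif_pos hj] at h
  split_ifs at h with hcond
  · have := congrArg (fun st => st.pc k) h; simp [hpc] at this
  · simp only [not_or, not_lt, not_and, ne_eq, not_not] at hcond
    obtain ⟨⟨hle, hidx⟩, hcol, hs0, hss⟩ := hcond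
    have hjk : j ≠ k.val := by
      rintro rfl
      have hIk := hI k
      rw [hpc] at hIk
      exact hss (by simp [PcConsistent] at hIk; simp [hIk])
    refine ⟨hcol, hs0, hss, Prod.Lex.toLex_lt_toLex.2 ?_⟩
    rcases hle.lt_or_eq with hlt | heq
    · exact Or.inl hlt
    · exact Or.inr ⟨heq, by have := hidx heq.symm; omega⟩

lemma stutter_wDiff (h : bwStep st k st) (hpc : st.pc k = .wDiff s c m j) (hj : j < N) :
    st.gcolor = c ∧ (st.token ⟨j, hj⟩).color ≠ some c ∧ (st.token ⟨j, hj⟩).session ≠ 0 ∧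
      (st.token ⟨j, hj⟩).session ≠ s := by
  simp only [bwStep, hpc, dif_pos hj] at h
  split_ifs at h with hcond
  · have := congrArg (fun st => st.pc k) h; simp [hpc] at this
  · simpa [not_or] using hcond

lemma token_of_isBusyWait (hI : StateInv st) (h : IsBusyWait c m (st.pc k)) :
    ∃ s, st.token k = ⟨s, some c, m⟩ ∧ 0 < s ∧ st.choosing k = false := by
  have hk := hI k
  obtain ⟨s, j, hL | hL | hL⟩ := h <;> rw [hL] at hk <;> exact ⟨s, hk.1, hk.2.2.1, hk.2.1⟩

lemma pc_ne_remainder_of_inEntry (h : bwInEntry st k) : st.pc k ≠ .remainder := by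
  intro hL
  simp [bwInEntry, hL] at h

end Step

section Execution

variable {N : ℕ} {e : BWExec N}

lemma stateInv_exec (e : BWExec N) (n : ℕ) : StateInv (e.state n) := by
  induction n with
  | zero => obtain ⟨c0, h0⟩ := e.init; rw [h0]; exact stateInv_init N c0
  | succ n ih => exact stateInv_step ih (e.step n)

lemma frame_of_sched_ne {j : Fin N} {t : ℕ} (h : e.sched t ≠ j) :
    (e.state (t + 1)).pc j = (e.state t).pc j ∧
      (e.state (t + 1)).token j = (e.state t).token j ∧
      (e.state (t + 1)).choosing j = (e.state t).choosing j :=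
  step_frame (e.step t) (Ne.symm h)

lemma forall_ge_of_own_step {q : Fin N} {r : ℕ} {P : BWPc → BWTok → Prop}
    (h0 : P ((e.state r).pc q) ((e.state r).token q))
    (hstep : ∀ t, r ≤ t → e.sched t = q → P ((e.state t).pc q) ((e.state t).token q) →
      P ((e.state (t + 1)).pc q) ((e.state (t + 1)).token q)) :
    ∀ t, r ≤ t → P ((e.state t).pc q) ((e.state t).token q) := by
  intro t ht
  induction t, ht using Nat.le_induction with
  | base => exact h0
  | succ t ht ih =>
    by_cases hq : e.sched t = q
    · exact hstep t ht hq ih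
    · obtain ⟨hpc, htok, -⟩ := frame_of_sched_ne hq
      rwa [hpc, htok]

lemma rank_succ_lt {j : Fin N} {t : ℕ} (hrem : (e.state t).pc j ≠ .remainder)
    (hne : (e.state (t + 1)).pc j ≠ (e.state t).pc j) :
    rank N ((e.state (t + 1)).pc j) < rank N ((e.state t).pc j) := by
  by_cases hj : e.sched t = j
  · exact rank_lt_of_step (hj ▸ e.step t) hrem hne
  · exact absurd (frame_of_sched_ne hj).1 hne

lemma exists_pc_const_of_forall_ne_remainder {j : Fin N} {a : ℕ}
    (h : ∀ t, a ≤ t → (e.state t).pc j ≠ .remainder) :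
    ∃ T, a ≤ T ∧ ∀ t, T ≤ t → (e.state t).pc j = (e.state T).pc j := by
  have hanti : Antitone fun n => rank N ((e.state (a + n)).pc j) := by
    refine antitone_nat_of_succ_le fun n => ?_
    by_cases hpc : (e.state (a + n + 1)).pc j = (e.state (a + n)).pc j
    · exact (congrArg (rank N) hpc).le
    · exact (rank_succ_lt (h _ (by omega)) hpc).le
  obtain ⟨n₀, hn₀⟩ := WellFoundedLT.antitone_chain_condition hanti
  refine ⟨a + n₀, by omega, fun t ht => ?_⟩
  induction t, ht using Nat.le_induction with
  | base => rfl
  | succ t ht ih =>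
    by_contra hne
    rw [← ih] at hne
    have hlt := rank_succ_lt (h t (by omega)) hne
    have h1 := hn₀ (t - a) (by omega)
    have h2 := hn₀ (t + 1 - a) (by omega)
    rw [show a + (t - a) = t by omega] at h1
    rw [show a + (t + 1 - a) = t + 1 by omega] at h2
    omega

def Stuck (e : BWExec N) (j : Fin N) : Prop :=
  ∃ T, ∀ t, T ≤ t → (e.state t).pc j = (e.state T).pc j

lemma frequently_remainder_of_not_stuck {j : Fin N} (h : ¬ Stuck e j) (a : ℕ) :
    ∃ t, a ≤ t ∧ (e.state t).pc j = .remainder := by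
  by_contra! hno
  obtain ⟨T, -, hT⟩ := exists_pc_const_of_forall_ne_remainder hno
  exact h ⟨T, hT⟩

lemma token_choosing_const {j : Fin N} {T : ℕ}
    (hc : ∀ t, T ≤ t → (e.state t).pc j = (e.state T).pc j) (t : ℕ) (ht : T ≤ t) :
    (e.state t).token j = (e.state T).token j ∧
      (e.state t).choosing j = (e.state T).choosing j := by
  induction t, ht using Nat.le_induction with
  | base => exact ⟨rfl, rfl⟩
  | succ t ht ih =>
    rw [← ih.1, ← ih.2]
    by_cases hj : e.sched t = j
    · have hstep := hj ▸ e.step t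
      rw [eq_of_step_of_pc_eq hstep (by rw [hc t ht, hc (t + 1) (by omega)])]
      exact ⟨rfl, rfl⟩
    · exact (frame_of_sched_ne hj).2

lemma exists_stutter {j : Fin N} {T : ℕ}
    (hc : ∀ t, T ≤ t → (e.state t).pc j = (e.state T).pc j)
    (hne : (e.state T).pc j ≠ .remainder) (u : ℕ) :
    ∃ v, u ≤ v ∧ T ≤ v ∧ bwStep (e.state v) j (e.state v) := by
  obtain ⟨v, hv, hvj⟩ := e.fair j (max u T) (by rw [hc _ (le_max_right u T)]; exact hne)
  have hstep := hvj ▸ e.step v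
  rw [eq_of_step_of_pc_eq hstep (by rw [hc v (by omega), hc (v + 1) (by omega)])] at hstep
  exact ⟨v, by omega, by omega, hstep⟩

def LeavesCS (e : BWExec N) : Prop :=
  ∀ (i : Fin N) (n : ℕ), bwInCS (e.state n) i → ∃ m, n ≤ m ∧ ¬ bwInCS (e.state m) i

lemma isBusyWait_of_pc_const (hncs : LeavesCS e) {j : Fin N} {T : ℕ}
    (hc : ∀ t, T ≤ t → (e.state t).pc j = (e.state T).pc j)
    (hne : (e.state T).pc j ≠ .remainder) :
    ∃ c m, IsBusyWait c m ((e.state T).pc j) := by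
  obtain ⟨v, -, hTv, hstep⟩ := exists_stutter hc hne 0
  rcases pc_cases_of_step_of_pc_eq (stateInv_exec e v) hstep rfl with hrem | hcs | hwait
  · exact absurd (hc v hTv ▸ hrem) hne
  · obtain ⟨t, hvt, hout⟩ := hncs j v hcs
    rw [bwInCS, hc t (by omega)] at hout
    rw [bwInCS, hc v hTv] at hcs
    exact absurd hcs hout
  · rwa [← hc v hTv]

lemma inEntry_forever {i : Fin N} {n : ℕ}
    (h : bwInEntry (e.state n) i) (hcs : ∀ t, n ≤ t → ¬ bwInCS (e.state t) i) :
    ∀ t, n ≤ t → bwInEntry (e.state t) i := by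
  intro t ht
  induction t, ht using Nat.le_induction with
  | base => exact h
  | succ t ht ih =>
    by_cases hi : e.sched t = i
    · exact (inEntry_step (hi ▸ e.step t) ih).resolve_right (hcs (t + 1) (by omega))
    · unfold bwInEntry
      rwa [(frame_of_sched_ne hi).1]

end Execution

section GlobalColor

variable {N : ℕ} {e : BWExec N}

/-- An exit section of color `c` whose scan has not passed index `p`: a token of color
`c.opp` at `p` will stop it before it flips GlobalColor to `c.opp`. -/
def FlipGuarded (c : Color) (p : ℕ) : BWPc → Prop
  | .x1 _ c' _ j => c' = c → j ≤ p
  | .xFlip _ c' _ => c' ≠ c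
  | _ => True

lemma flipGuarded_step {st st' : BWState N} {k p : Fin N} {c : Color} {sP mP : ℕ}
    (hp : st.token p = ⟨sP, some c.opp, mP⟩) (hsP : sP ≠ 0) (h : bwStep st k st')
    (hG : FlipGuarded c p (st.pc k)) : FlipGuarded c p (st'.pc k) := by
  revert h; unfold bwStep
  split <;> (try split) <;> (try split) <;> intro hs <;>
    (try obtain hs | ⟨_, _, hs⟩ := hs) <;> (try subst hs) <;> simp_all [FlipGuarded]
  · rename_i hj _ hread
    rintro rfl
    refine lt_of_le_of_ne (hG rfl) fun hjp => ?_
    obtain rfl : p = ⟨_, hj⟩ := Fin.ext hjp.symm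
    rw [hp] at hread
    exact hread hsP rfl
  · exact fun hc => absurd (hG hc) (by omega)

lemma pc_of_flipAt {u : ℕ} (h : bwFlipAt e u) :
    ∃ s m, (e.state u).pc (e.sched u) = .xFlip s (e.state (u + 1)).gcolor.opp m ∧
      (e.state (u + 1)).pc (e.sched u) = .x2 := by
  rcases gcolor_step (e.step u) with heq | ⟨s, c, m, hpc, hc⟩
  · exact absurd heq h
  · have hstep := e.step u
    simp only [bwStep, hpc] at hstep
    exact ⟨s, m, by rw [hpc, hc, Color.opp_opp], by rw [hstep]; simp⟩

/-- Each process flips GlobalColor to `c` at most once: its next attempt, from an exit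
section of color `c.opp`, is stopped by the scan at `x`'s token. -/
lemma flipAt_sched_injOn {x : Fin N} {T₀ s₀ m₀ : ℕ} {c : Color}
    (hx : ∀ t, T₀ ≤ t → (e.state t).token x = ⟨s₀, some c, m₀⟩) (hs₀ : s₀ ≠ 0) :
    Set.InjOn e.sched {u | T₀ ≤ u ∧ bwFlipAt e u ∧ (e.state (u + 1)).gcolor = c} := by
  suffices h : ∀ u u', T₀ ≤ u → u < u' → e.sched u = e.sched u' → bwFlipAt e u →
      (e.state (u + 1)).gcolor = c → bwFlipAt e u' → (e.state (u' + 1)).gcolor = c → False by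
    rintro u ⟨hu, hf, hc⟩ u' ⟨hu', hf', hc'⟩ hk
    by_contra hne
    rcases Nat.lt_or_gt_of_ne hne with hlt | hlt
    · exact h u u' hu hlt hk hf hc hf' hc'
    · exact h u' u hu' hlt hk.symm hf' hc' hf hc
  intro u u' hu huu' hk hf hc hf' hc'
  obtain ⟨-, -, -, hx2⟩ := pc_of_flipAt hf
  obtain ⟨s, m, hflip, -⟩ := pc_of_flipAt hf'
  have hguard := forall_ge_of_own_step (q := e.sched u) (r := u + 1)
    (P := fun L _ => FlipGuarded c.opp x L) (by rw [hx2]; trivial)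
    (fun t ht hq hG => flipGuarded_step (by rw [Color.opp_opp]; exact hx t (by omega)) hs₀
      (hq ▸ e.step t) hG) u' huu'
  rw [hk, hflip, hc'] at hguard
  exact hguard rfl

lemma gcolor_eventually_const {x : Fin N} {T₀ s₀ m₀ : ℕ} {c : Color}
    (hx : ∀ t, T₀ ≤ t → (e.state t).token x = ⟨s₀, some c, m₀⟩) (hs₀ : s₀ ≠ 0) :
    ∃ T, T₀ ≤ T ∧ ∃ g, ∀ t, T ≤ t → (e.state t).gcolor = g := by
  obtain ⟨M, hM⟩ := ((Set.toFinite _).of_finite_image (flipAt_sched_injOn hx hs₀)).bddAbove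
  have no_flip : ∀ t, max T₀ (M + 1) ≤ t → (e.state t).gcolor = c.opp →
      (e.state (t + 1)).gcolor = c.opp := by
    intro t ht hct
    by_contra hne
    have hflip : bwFlipAt e t := by rw [bwFlipAt, hct]; exact hne
    have hc : (e.state (t + 1)).gcolor = c := by
      simpa [Color.opp_opp] using Color.eq_opp_of_ne hne
    have := hM ⟨le_of_max_le_left ht, hflip, hc⟩
    omega
  by_cases hopp : ∃ t, max T₀ (M + 1) ≤ t ∧ (e.state t).gcolor = c.opp
  · obtain ⟨t₁, ht₁, hc₁⟩ := hopp
    refine ⟨t₁, le_of_max_le_left ht₁, c.opp, fun t ht => ?_⟩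
    induction t, ht using Nat.le_induction with
    | base => exact hc₁
    | succ t ht ih => exact no_flip t (by omega) ih
  · push Not at hopp
    exact ⟨max T₀ (M + 1), le_max_left _ _, c, fun t ht =>
      by simpa [Color.opp_opp] using Color.eq_opp_of_ne (hopp t ht)⟩

end GlobalColor

section Behind

variable {N : ℕ} {st st' : BWState N} {p q : Fin N} {g cP : Color} {sP mP : ℕ}

def Behind (g cP : Color) (sP mP s : ℕ) (c : Color) (m : ℕ) : Prop :=
  c = g ∧ (c = cP → s ≠ sP → mP < m)

/-- What the doorway forces on an invocation that starts after GlobalColor has frozen at `g`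
and process `p` has frozen its token `(sP, cP, mP)`: it takes color `g`, and if it conflicts
with `p` in color `cP`, its number exceeds `mP` once its scan has passed `p`. -/
def BehindPc (g cP : Color) (sP mP p : ℕ) : BWPc → Prop
  | .scan s c j m => c = g ∧ (c = cP → s ≠ sP → p < j → mP ≤ m)
  | .d4 s c m => Behind g cP sP mP s c m
  | .d5 s c m => Behind g cP sP mP s c m
  | .w1 s c m _ => Behind g cP sP mP s c m
  | .wB s c m _ => Behind g cP sP mP s c m
  | .wSame s c m _ => Behind g cP sP mP s c m
  | .wDiff s c m _ => Behind g cP sP mP s c m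
  | .cs s c m => Behind g cP sP mP s c m
  | .x1 s c m _ => Behind g cP sP mP s c m
  | .xFlip s c m => Behind g cP sP mP s c m
  | _ => True

def BehindTok (g cP : Color) (sP mP : ℕ) (tok : BWTok) : Prop :=
  ∀ c, tok.color = some c → Behind g cP sP mP tok.session c tok.number

lemma behind_step (hg : st.gcolor = g) (hp : st.token p = ⟨sP, some cP, mP⟩) (hsP : sP ≠ 0)
    (h : bwStep st q st')
    (hB : BehindPc g cP sP mP p (st.pc q) ∧ BehindTok g cP sP mP (st.token q)) :
    BehindPc g cP sP mP p (st'.pc q) ∧ BehindTok g cP sP mP (st'.token q) := by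
  revert h; unfold bwStep
  split <;> (try split) <;> (try split) <;> intro hs <;>
    (try obtain hs | ⟨_, _, hs⟩ := hs) <;> (try subst hs) <;>
    simp_all [BehindPc, BehindTok, Behind, BWTok.init]
  · rename_i hj _ _
    intro hgc hs hpj
    rcases hpj.lt_or_eq with hlt | hpj
    · exact Or.inl (hB.1.2 (hB.1.1.trans hgc) hs hlt)
    · obtain rfl : p = ⟨_, hj⟩ := Fin.ext hpj
      simp [hp]
  · rename_i hj _ hread
    intro hgc hs hpj
    rcases hpj.lt_or_eq with hlt | hpj
    · exact hB.1.2 (hB.1.1.trans hgc) hs hlt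
    · obtain rfl : p = ⟨_, hj⟩ := Fin.ext hpj
      rw [hp] at hread
      exact absurd (hread (by rw [hgc]) hsP).symm hs
  · intro hgc hs
    exact hB.1.2 (hB.1.1.trans hgc) hs (by omega)

/-- Doorway and waiting-room positions of a session-`sQ` invocation that has not yet passed
index `p` of the waiting room. -/
def Trapped (sQ p : ℕ) (cP : Color) : BWPc → Prop
  | .d2 s => s = sQ
  | .d3 s => s = sQ
  | .scan s _ _ _ => s = sQ
  | .d4 s _ _ => s = sQ
  | .d5 s _ _ => s = sQ
  | .w1 s _ _ j => s = sQ ∧ j ≤ p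
  | .wB s _ _ j => s = sQ ∧ j ≤ p
  | .wSame s c _ j => s = sQ ∧ j ≤ p ∧ (j = p → c = cP)
  | .wDiff s c _ j => s = sQ ∧ j ≤ p ∧ (j = p → c ≠ cP)
  | _ => False

lemma trapped_step {sQ : ℕ} (hg : st.gcolor = g) (hp : st.token p = ⟨sP, some cP, mP⟩)
    (hsP : sP ≠ 0) (hsQ : sQ ≠ sP) (hB : BehindPc g cP sP mP p (st.pc q))
    (h : bwStep st q st') (hT : Trapped sQ p cP (st.pc q)) : Trapped sQ p cP (st'.pc q) := by
  revert h; unfold bwStep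
  split <;> (try split) <;> (try split) <;> intro hs <;>
    (try obtain hs | ⟨_, _, hs⟩ := hs) <;> (try subst hs) <;>
    simp_all [Trapped]
  · omega
  · rename_i hj _ hcol
    intro hjp
    obtain rfl : p = ⟨_, hj⟩ := Fin.ext hjp.symm
    rw [hp] at hcol
    exact (Option.some.inj hcol).symm
  · rename_i hj _ hcol
    intro hjp hc
    obtain rfl : p = ⟨_, hj⟩ := Fin.ext hjp.symm
    rw [hp, hc] at hcol
    exact hcol rfl
  · rename_i hj _ hpass
    refine lt_of_le_of_ne hT.2.1 fun hjp => ?_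
    obtain rfl : p = ⟨_, hj⟩ := Fin.ext hjp.symm
    have hc := hT.2.2 rfl
    have hlt := hB.2 hc hsQ
    rw [hp] at hpass
    subst hc
    simp only [not_true_eq_false, hsP, Ne.symm hsQ, or_false] at hpass
    omega
  · rename_i hj _ hpass
    refine lt_of_le_of_ne hT.2.1 fun hjp => ?_
    obtain rfl : p = ⟨_, hj⟩ := Fin.ext hjp.symm
    have hc := hT.2.2 rfl
    rw [hp] at hpass
    simp only [Option.some.injEq] at hpass
    rcases hpass with h | h | h | h
    · exact h hB.1.symm
    · exact hc h.symm
    · exact hsP h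
    · exact hsQ h.symm

lemma trapped_of_choosing (hI : StateInv st) (hch : st.choosing q = true) (p : ℕ) (cP : Color) :
    (st.token q).session ≠ 0 ∧ Trapped (st.token q).session p cP (st.pc q) := by
  have hq := hI q
  cases hL : st.pc q <;> simp_all [PcConsistent, Trapped] <;> omega

lemma trapped_of_color_eq_none (hI : StateInv st) (hcol : (st.token q).color = none)
    (hs : (st.token q).session ≠ 0) (p : ℕ) (cP : Color) :
    Trapped (st.token q).session p cP (st.pc q) := by
  have hq := hI q
  cases hL : st.pc q <;> simp_all [PcConsistent, Trapped, BWTok.init]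
  obtain ⟨⟨s, ⟨c, m, htok⟩, -⟩, -⟩ := hq
  simp [htok] at hcol

variable {e : BWExec N} {r : ℕ}

lemma behind_forever (hg : ∀ t, r ≤ t → (e.state t).gcolor = g)
    (hp : ∀ t, r ≤ t → (e.state t).token p = ⟨sP, some cP, mP⟩) (hsP : sP ≠ 0)
    (hr : (e.state r).pc q = .remainder) :
    ∀ t, r ≤ t → BehindPc g cP sP mP p ((e.state t).pc q) ∧
      BehindTok g cP sP mP ((e.state t).token q) := by
  refine forall_ge_of_own_step (P := fun L tok => BehindPc g cP sP mP p L ∧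
    BehindTok g cP sP mP tok) ?_ fun t ht hq hB =>
    behind_step (hg t ht) (hp t ht) hsP (hq ▸ e.step t) hB
  have hinit := stateInv_exec e r q
  rw [hr] at hinit ⊢
  simp [BehindPc, BehindTok, hinit.1, BWTok.init]

/-- `Trapped` is invariant once `p`'s token and GlobalColor are frozen, and it excludes the
remainder section. -/
lemma not_trapped_of_not_stuck (hq : ¬ Stuck e q) (hg : ∀ t, r ≤ t → (e.state t).gcolor = g)
    (hp : ∀ t, r ≤ t → (e.state t).token p = ⟨sP, some cP, mP⟩) (hsP : sP ≠ 0)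
    (hr : (e.state r).pc q = .remainder) {v sQ : ℕ} (hrv : r ≤ v) (hsQ : sQ ≠ sP) :
    ¬ Trapped sQ p cP ((e.state v).pc q) := by
  intro h0
  have hB := behind_forever hg hp hsP hr
  have htrap := forall_ge_of_own_step (P := fun L _ => Trapped sQ p cP L) h0
    fun t ht hq hT => trapped_step (hg t (by omega)) (hp t (by omega)) hsP hsQ
      (hB t (by omega)).1 (hq ▸ e.step t) hT
  obtain ⟨t, hvt, hrem⟩ := frequently_remainder_of_not_stuck hq v
  have := htrap t hvt
  rw [hrem] at this
  exact this

end Behind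

section Settled

variable {N : ℕ} {e : BWExec N} {T : ℕ} {g : Color}

structure Settled (e : BWExec N) (T : ℕ) (g : Color) : Prop where
  pc_eq : ∀ j, Stuck e j → ∀ t, T ≤ t → (e.state t).pc j = (e.state T).pc j
  gcolor_eq : ∀ t, T ≤ t → (e.state t).gcolor = g

def Parked (e : BWExec N) (T : ℕ) (q : Fin N) (c : Color) (m : ℕ) : Prop :=
  Stuck e q ∧ IsBusyWait c m ((e.state T).pc q)

lemma exists_settled {T₁ : ℕ} (hg : ∀ t, T₁ ≤ t → (e.state t).gcolor = g) :
    ∃ T, T₁ ≤ T ∧ Settled e T g := by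
  classical
  choose τ hτ using fun j : {j // Stuck e j} => j.2
  let T := max T₁ (Finset.univ.sup τ)
  have hτT : ∀ j, τ j ≤ T := fun j =>
    (Finset.le_sup (Finset.mem_univ j)).trans (le_max_right _ _)
  refine ⟨T, le_max_left _ _, fun j hj t ht => ?_, fun t ht => hg t (by omega)⟩
  rw [hτ ⟨j, hj⟩ t (by have := hτT ⟨j, hj⟩; omega), hτ ⟨j, hj⟩ T (hτT ⟨j, hj⟩)]

lemma Settled.token_eq (hS : Settled e T g) {j : Fin N} (hj : Stuck e j) (t : ℕ) (ht : T ≤ t) :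
    (e.state t).token j = (e.state T).token j :=
  (token_choosing_const (hS.pc_eq j hj) t ht).1

lemma parked_of_stuck (hncs : LeavesCS e) (hS : Settled e T g) {q : Fin N} (hq : Stuck e q)
    (hs : ((e.state T).token q).session ≠ 0) :
    ∃ s c m, Parked e T q c m ∧ (e.state T).token q = ⟨s, some c, m⟩ := by
  have hne : (e.state T).pc q ≠ .remainder := by
    intro hL
    have hq := stateInv_exec e T q
    rw [hL] at hq
    simp [hq.1, BWTok.init] at hs
  obtain ⟨c, m, hw⟩ := isBusyWait_of_pc_const hncs (hS.pc_eq q hq) hne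
  obtain ⟨s, htok, -⟩ := token_of_isBusyWait (stateInv_exec e T) hw
  exact ⟨s, c, m, ⟨hq, hw⟩, htok⟩

lemma pc_ne_w1 (hncs : LeavesCS e) (hS : Settled e T g) {j : Fin N} (hj : Stuck e j)
    {s m κ : ℕ} {c : Color} : (e.state T).pc j ≠ .w1 s c m κ := by
  intro hjL
  have hcj := hS.pc_eq j hj
  have hne : (e.state T).pc j ≠ .remainder := by simp [hjL]
  have hIj := stateInv_exec e T j
  rw [hjL] at hIj
  have htokj : ∀ t, T ≤ t → (e.state t).token j = ⟨s, some c, m⟩ :=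
    fun t ht => (hS.token_eq hj t ht).trans hIj.1
  obtain ⟨v₀, -, hv₀, hstep₀⟩ := exists_stutter hcj hne 0
  obtain ⟨hκ, -⟩ := stutter_w1 hstep₀ (by rw [hcj v₀ hv₀, hjL])
  set q : Fin N := ⟨κ, hκ⟩
  have blocked : ∀ u, ∃ v, u ≤ v ∧ T ≤ v ∧
      (e.state v).choosing q = true ∧ ((e.state v).token q).session ≠ s := by
    intro u
    obtain ⟨v, hu, hv, hstep⟩ := exists_stutter hcj hne u
    obtain ⟨_, h⟩ := stutter_w1 hstep (by rw [hcj v hv, hjL])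
    exact ⟨v, hu, hv, h⟩
  by_cases hq : Stuck e q
  · obtain ⟨v, -, hv, hch, -⟩ := blocked 0
    have hchT := (token_choosing_const (hS.pc_eq q hq) v hv).2 ▸ hch
    obtain ⟨hsq, -⟩ := trapped_of_choosing (stateInv_exec e T) hchT 0 c
    obtain ⟨_, _, _, ⟨_, hw⟩, _⟩ := parked_of_stuck hncs hS hq hsq
    obtain ⟨-, -, -, hchf⟩ := token_of_isBusyWait (stateInv_exec e T) hw
    rw [hchf] at hchT
    exact Bool.false_ne_true hchT
  · obtain ⟨r, hr, hrem⟩ := frequently_remainder_of_not_stuck hq T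
    obtain ⟨v, hrv, -, hch, hss⟩ := blocked r
    obtain ⟨-, htrap⟩ := trapped_of_choosing (stateInv_exec e v) hch j c
    exact not_trapped_of_not_stuck hq (fun t ht => hS.gcolor_eq t (by omega))
      (fun t ht => htokj t (by omega)) hIj.2.2.1.ne' hrem hrv hss htrap

lemma wSame_pointer (hncs : LeavesCS e) (hS : Settled e T g) {j : Fin N} (hj : Stuck e j)
    {s m κ : ℕ} {c : Color} (hjL : (e.state T).pc j = .wSame s c m κ) :
    ∃ q mq, Parked e T q c mq ∧ toLex (mq, q.val) < toLex (m, j.val) := by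
  have hcj := hS.pc_eq j hj
  have hne : (e.state T).pc j ≠ .remainder := by simp [hjL]
  have hIj := stateInv_exec e T j
  rw [hjL] at hIj
  have htokj : ∀ t, T ≤ t → (e.state t).token j = ⟨s, some c, m⟩ :=
    fun t ht => (hS.token_eq hj t ht).trans hIj.1
  set q : Fin N := ⟨κ, hIj.2.2.2⟩
  have blocked : ∀ u, ∃ v, u ≤ v ∧ T ≤ v ∧
      ((e.state v).token q).color = some c ∧ ((e.state v).token q).session ≠ 0 ∧
      ((e.state v).token q).session ≠ s ∧
      toLex (((e.state v).token q).number, κ) < toLex (m, j.val) := by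
    intro u
    obtain ⟨v, hu, hv, hstep⟩ := exists_stutter hcj hne u
    exact ⟨v, hu, hv, stutter_wSame (stateInv_exec e v) hstep (by rw [hcj v hv, hjL]) _⟩
  by_cases hq : Stuck e q
  · obtain ⟨v, -, hv, hcol, hs0, -, hlex⟩ := blocked 0
    rw [hS.token_eq hq v hv] at hcol hs0 hlex
    obtain ⟨sq, cq, mq, hpark, htokq⟩ := parked_of_stuck hncs hS hq hs0
    rw [htokq] at hcol hlex
    cases Option.some.inj hcol
    exact ⟨q, mq, hpark, hlex⟩
  · obtain ⟨r, hr, hrem⟩ := frequently_remainder_of_not_stuck hq T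
    obtain ⟨v, hrv, -, hcol, -, hss, hlex⟩ := blocked r
    have hB := (behind_forever (fun t ht => hS.gcolor_eq t (by omega))
      (fun t ht => htokj t (by omega)) hIj.2.2.1.ne' hrem v hrv).2 c hcol
    have := hB.2 rfl hss
    rw [Prod.Lex.toLex_lt_toLex] at hlex
    omega

lemma wDiff_pointer (hncs : LeavesCS e) (hS : Settled e T g) {j : Fin N} (hj : Stuck e j)
    {s m κ : ℕ} {c : Color} (hjL : (e.state T).pc j = .wDiff s c m κ) :
    g = c ∧ ∃ q mq, Parked e T q c.opp mq := by
  have hcj := hS.pc_eq j hj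
  have hne : (e.state T).pc j ≠ .remainder := by simp [hjL]
  have hIj := stateInv_exec e T j
  rw [hjL] at hIj
  have htokj : ∀ t, T ≤ t → (e.state t).token j = ⟨s, some c, m⟩ :=
    fun t ht => (hS.token_eq hj t ht).trans hIj.1
  set q : Fin N := ⟨κ, hIj.2.2.2⟩
  have blocked : ∀ u, ∃ v, u ≤ v ∧ T ≤ v ∧ (e.state v).gcolor = c ∧
      ((e.state v).token q).color ≠ some c ∧ ((e.state v).token q).session ≠ 0 ∧
      ((e.state v).token q).session ≠ s := by
    intro u
    obtain ⟨v, hu, hv, hstep⟩ := exists_stutter hcj hne u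
    exact ⟨v, hu, hv, stutter_wDiff hstep (by rw [hcj v hv, hjL]) _⟩
  have hgc : g = c := by
    obtain ⟨v, -, hv, hgv, -⟩ := blocked 0
    rw [← hS.gcolor_eq v hv, hgv]
  refine ⟨hgc, ?_⟩
  by_cases hq : Stuck e q
  · obtain ⟨v, -, hv, -, hcol, hs0, -⟩ := blocked 0
    rw [hS.token_eq hq v hv] at hcol hs0
    obtain ⟨sq, cq, mq, hpark, htokq⟩ := parked_of_stuck hncs hS hq hs0
    rw [htokq] at hcol
    rw [← Color.eq_opp_of_ne fun h => hcol (congrArg some h)]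
    exact ⟨q, mq, hpark⟩
  · exfalso
    obtain ⟨r, hr, hrem⟩ := frequently_remainder_of_not_stuck hq T
    obtain ⟨v, hrv, -, -, hcol, hs0, hss⟩ := blocked r
    have hgr : ∀ t, r ≤ t → (e.state t).gcolor = g := fun t ht => hS.gcolor_eq t (by omega)
    have hpr : ∀ t, r ≤ t → (e.state t).token j = ⟨s, some c, m⟩ :=
      fun t ht => htokj t (by omega)
    cases hcq : ((e.state v).token q).color with
    | none =>
      exact not_trapped_of_not_stuck hq hgr hpr hIj.2.2.1.ne' hrem hrv hss
        (trapped_of_color_eq_none (stateInv_exec e v) hcq hs0 j c)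
    | some cq =>
      have hB := (behind_forever hgr hpr hIj.2.2.1.ne' hrem v hrv).2 cq hcq
      exact hcol (by rw [hcq, hB.1, hgc])

lemma parked_descent (hncs : LeavesCS e) (hS : Settled e T g) {c : Color}
    (hc : c = g.opp ∨ ∀ q m, ¬ Parked e T q c.opp m) {q : Fin N} {m : ℕ}
    (hq : Parked e T q c m) :
    ∃ q' m', Parked e T q' c m' ∧ toLex (m', q'.val) < toLex (m, q.val) := by
  obtain ⟨hstuck, s, κ, hL | hL | hL⟩ := hq
  · exact absurd hL (pc_ne_w1 hncs hS hstuck)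
  · exact wSame_pointer hncs hS hstuck hL
  · obtain ⟨hgc, q', m', hpark⟩ := wDiff_pointer hncs hS hstuck hL
    rcases hc with rfl | hno
    · exact absurd hgc.symm (Color.opp_ne_self g)
    · exact absurd hpark (hno q' m')

lemma not_parked_of_descent (hncs : LeavesCS e) (hS : Settled e T g) {c : Color}
    (hc : c = g.opp ∨ ∀ q m, ¬ Parked e T q c.opp m) (q : Fin N) (m : ℕ) :
    ¬ Parked e T q c m := by
  intro hq
  obtain ⟨⟨q₀, m₀⟩, hmin, hlow⟩ :=
    (InvImage.wf (fun x : Fin N × ℕ => toLex (x.2, x.1.val)) wellFounded_lt).has_min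
      {x | Parked e T x.1 c x.2} ⟨(q, m), hq⟩
  obtain ⟨q', m', hpark, hlt⟩ := parked_descent hncs hS hc hmin
  exact hlow (q', m') hpark hlt

lemma not_parked (hncs : LeavesCS e) (hS : Settled e T g) (q : Fin N) (c : Color) (m : ℕ) :
    ¬ Parked e T q c m := by
  have hopp := not_parked_of_descent hncs hS (c := g.opp) (Or.inl rfl)
  by_cases hcg : c = g
  · subst hcg
    exact not_parked_of_descent hncs hS (Or.inr hopp) q m
  · rw [Color.eq_opp_of_ne hcg]
    exact hopp q m

end Settled

end BWBakery

open BWBakery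

/-- **Starvation freedom for the BWBGME algorithm.**  In every execution in which no
process stays in the critical section forever, every process that enters the entry
section eventually enters the critical section. -/
theorem bw_starvation_freedom {N : ℕ} (e : BWExec N)
    (hncs : ∀ (i : Fin N) (n : ℕ), bwInCS (e.state n) i →
      ∃ m, n ≤ m ∧ ¬ bwInCS (e.state m) i)
    (i : Fin N) (n : ℕ) (h : bwInEntry (e.state n) i) :
    ∃ m, n ≤ m ∧ bwInCS (e.state m) i := by
  by_contra! hcs
  have hactive t (ht : n ≤ t) : (e.state t).pc i ≠ .remainder :=
    pc_ne_remainder_of_inEntry (inEntry_forever h hcs t ht)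
  obtain ⟨Tᵢ, hTᵢ, hstuck⟩ := exists_pc_const_of_forall_ne_remainder hactive
  obtain ⟨c, m, hwait⟩ := isBusyWait_of_pc_const hncs hstuck (hactive Tᵢ hTᵢ)
  obtain ⟨s, htok, hs, -⟩ := token_of_isBusyWait (stateInv_exec e Tᵢ) hwait
  obtain ⟨T₁, hT₁, g, hg⟩ := gcolor_eventually_const
    (fun t ht => (token_choosing_const hstuck t ht).1.trans htok) hs.ne'
  obtain ⟨T, hT, hS⟩ := exists_settled hg
  exact not_parked hncs hS i c m ⟨⟨Tᵢ, hstuck⟩, hstuck T (by omega) ▸ hwait⟩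
end
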